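/- Let R = K[x] and P_n the two-term complex R --x^n--> R in degrees -1, 0. For positive integers m, n, let y^i_{m,n}: P_m → P_n[1] (for i ≤ m) be the morphism represented by the chain map whose only nonzero component is multiplication by x^{m-i} from the degree -1 term of P_m to the degree 0 term of P_n[1] (the complex R --(-x^n)--> R in degrees -2, -1). Then y^i_{m,n} = 0 whenever i ≤ max(0, m-n), and {y^i_{m,n} : max(0, m-n) < i ≤ m} is a K-basis of Hom_{K^b(proj R)}(P_m, P_n[1]). -/

import Mathlib

/- Setup: `R = K[x]`, the two-term cochain complexes `P n = (R --x^n--> R)` in degrees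
`-1, 0`, and the morphisms `x^i_{m,n}` and `y^i_{m,n}` in the bounded homotopy category
`K^b(proj R)` (realized inside the homotopy category of cochain complexes of
`R`-modules). -/

noncomputable section
open CategoryTheory CategoryTheory.Limits Polynomial ZeroObject CategoryTheory.Pretriangulated

variable (K : Type) [Field K]

abbrev RMod := ModuleCat.of (Polynomial K) (Polynomial K)

/-- Multiplication by `x^a` on `R = K[x]`. -/
def mulX (a : ℕ) : RMod K ⟶ RMod K :=
  ModuleCat.ofHom (LinearMap.mulLeft (Polynomial K) ((X : Polynomial K) ^ a))

lemma mulX_comp (a b : ℕ) : mulX K a ≫ mulX K b = mulX K (a + b) := by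
  ext p
  simp only [mulX, ModuleCat.hom_comp, ModuleCat.hom_ofHom, LinearMap.comp_apply,
    LinearMap.mulLeft_apply]
  ring_nf

/-- The graded pieces of the two-term complexes `P n`. -/
def Pobj : ℤ → ModuleCat (Polynomial K) := fun i =>
  if i = -1 ∨ i = 0 then RMod K else ModuleCat.of (Polynomial K) PUnit

lemma PobjNeg : Pobj K (-1) = RMod K := by simp [Pobj]
lemma PobjZero : Pobj K 0 = RMod K := by simp [Pobj]

/-- The differential of `P n`. -/
def Pd (n : ℕ) : ∀ i : ℤ, Pobj K i ⟶ Pobj K (i + 1) := fun i =>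
  if h : i = -1 then
    eqToHom (by rw [h, PobjNeg]) ≫ mulX K n ≫ eqToHom (by rw [h]; norm_num [PobjZero])
  else 0

/-- The two-term complex `P n = (R --x^n--> R)` in degrees `-1, 0`. -/
def P (n : ℕ) : CochainComplex (ModuleCat (Polynomial K)) ℤ :=
  CochainComplex.of (Pobj K) (Pd K n) (fun i => by
    by_cases h : i = -1
    · have h2 : Pd K n (i + 1) = 0 := dif_neg (by omega)
      rw [h2, Limits.comp_zero]
    · have h1 : Pd K n i = 0 := dif_neg h
      rw [h1, Limits.zero_comp])

lemma P_d_eq_zero (n : ℕ) (i j : ℤ) (hi : i ≠ -1) : (P K n).d i j = 0 := by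
  by_cases h : i + 1 = j
  · subst h
    show CochainComplex.of.d (Pobj K) (Pd K n) i (i + 1) = 0
    rw [CochainComplex.of_d]
    exact dif_neg hi
  · exact HomologicalComplex.shape _ _ _ (by simpa using h)

/-- The components of the chain map which is multiplication by `x^a` in degree `-1`
and by `x^b` in degree `0`. -/
def xComp (a b : ℕ) : ∀ i : ℤ, Pobj K i ⟶ Pobj K i := fun i =>
  if h : i = -1 then eqToHom (by rw [h, PobjNeg]) ≫ mulX K a ≫ eqToHom (by rw [h, PobjNeg])
  else if h0 : i = 0 then
    eqToHom (by rw [h0, PobjZero]) ≫ mulX K b ≫ eqToHom (by rw [h0, PobjZero])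
  else 0

/-- The chain map `P m ⟶ P n` which is multiplication by `x^a` in degree `-1` and by
`x^b` in degree `0`; it commutes with the differentials since `a + n = b + m`. -/
def xMap (m n a b : ℕ) (hab : a + n = b + m) : P K m ⟶ P K n :=
  CochainComplex.ofHom (xComp K a b) (by
    intro i
    have hdn : (P K n).d i (i + 1) = Pd K n i := by
      show CochainComplex.of.d (Pobj K) (Pd K n) i (i + 1) = _
      rw [CochainComplex.of_d]
    have hdm : (P K m).d i (i + 1) = Pd K m i := by
      show CochainComplex.of.d (Pobj K) (Pd K m) i (i + 1) = _
      rw [CochainComplex.of_d]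
    rw [hdn, hdm]
    by_cases hi : i = -1
    · subst hi
      show xComp K a b (-1) ≫ Pd K n (-1) = Pd K m (-1) ≫ xComp K a b (-1 + 1)
      rw [show xComp K a b (-1 + 1) = xComp K a b 0 from rfl]
      rw [show xComp K a b (-1) = eqToHom (PobjNeg K) ≫ mulX K a ≫ eqToHom (PobjNeg K).symm
          from dif_pos rfl]
      rw [show xComp K a b 0 = eqToHom (PobjZero K) ≫ mulX K b ≫ eqToHom (PobjZero K).symm
          from by rw [xComp, dif_neg (by norm_num), dif_pos rfl]]
      rw [show Pd K n (-1) = eqToHom (PobjNeg K) ≫ mulX K n ≫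
            eqToHom (by norm_num [PobjZero] : RMod K = Pobj K (-1 + 1))
          from dif_pos rfl]
      rw [show Pd K m (-1) = eqToHom (PobjNeg K) ≫ mulX K m ≫
            eqToHom (by norm_num [PobjZero] : RMod K = Pobj K (-1 + 1))
          from dif_pos rfl]
      simp only [Category.assoc, eqToHom_trans_assoc, eqToHom_refl, Category.id_comp]
      try simp only [Category.comp_id]
      rw [← Category.assoc (mulX K a), mulX_comp, ← Category.assoc (mulX K m), mulX_comp, hab,
        Nat.add_comm b m]
      try rfl
    · have h1 : Pd K m i = 0 := dif_neg hi
      have h2 : Pd K n i = 0 := dif_neg hi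
      rw [h1, h2]
      exact Limits.comp_zero.trans Limits.zero_comp.symm)

/-- The components of `y^i_{m,n}`. -/
def yComp (m n a : ℕ) : ∀ i : ℤ, (P K m).X i ⟶ ((P K n)⟦(1 : ℤ)⟧).X i := fun i =>
  if h : i = -1 then
    eqToHom (by rw [h]; exact PobjNeg K) ≫ mulX K a ≫
      eqToHom (by rw [h]; show RMod K = Pobj K (-1 + 1); norm_num [PobjZero])
  else 0

/-- The chain map `P m ⟶ (P n)⟦1⟧` whose only nonzero component is multiplication by
`x^a` in degree `-1` (landing in the degree `0` part of `P n`). -/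
def yMap (m n a : ℕ) : P K m ⟶ (P K n)⟦(1 : ℤ)⟧ where
  f := yComp K m n a
  comm' := fun i j hij => by
    have hj : i + 1 = j := hij
    have hY : ∀ i' j' : ℤ, i' ≠ -2 → ((P K n)⟦(1 : ℤ)⟧).d i' j' = 0 := fun i' j' h => by
      rw [CochainComplex.shiftFunctor_obj_d',
        P_d_eq_zero K n _ _ (by change i' + 1 ≠ -1; omega), smul_zero]
      rfl
    by_cases hi : i = -1
    · rw [hY i j (by omega), Limits.comp_zero,
        show yComp K m n a j = 0 from dif_neg (by omega), Limits.comp_zero]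
    · rw [show yComp K m n a i = 0 from dif_neg hi, Limits.zero_comp]
      by_cases hj' : j = -1
      · rw [P_d_eq_zero K m i j hi, Limits.zero_comp]
      · rw [show yComp K m n a j = 0 from dif_neg hj', Limits.comp_zero]

/-- The homotopy category of cochain complexes of `K[x]`-modules, in which the bounded
homotopy category of finitely generated projectives embeds fully faithfully. -/
abbrev KbT := HomotopyCategory (ModuleCat (Polynomial K)) (ComplexShape.up ℤ)

abbrev Q : CochainComplex (ModuleCat (Polynomial K)) ℤ ⥤ KbT K :=
  HomotopyCategory.quotient _ _

/-- `P n` as an object of the homotopy category. -/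
abbrev Pbar (n : ℕ) : KbT K := (Q K).obj (P K n)

/-- The morphism `x^i_{m,n} : P m ⟶ P n` in the homotopy category, defined for
`max (0, n - m) ≤ i` (expressed with truncated subtraction on `ℕ`); in degree `-1` it is
multiplication by `x^(i+m-n)` and in degree `0` multiplication by `x^i`. -/
def xbar (m n i : ℕ) (h : n - m ≤ i) : Pbar K m ⟶ Pbar K n :=
  (Q K).map (xMap K m n (i + m - n) i (by omega))

/-- The identification `Q(P n ⟦1⟧) ≅ (Q (P n))⟦1⟧` in the homotopy category. -/
def shIso (n : ℕ) : (Q K).obj ((P K n)⟦(1 : ℤ)⟧) ≅ (Pbar K n)⟦(1 : ℤ)⟧ :=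
  ((Q K).commShiftIso (1 : ℤ)).app (P K n)

/-- The morphism `y^i_{m,n} : P m ⟶ (P n)[1]` in the homotopy category, defined for
`i ≤ m`; its only nonzero component is multiplication by `x^(m-i)` in degree `-1`. -/
def ybar (m n i : ℕ) (_h : i ≤ m) : Pbar K m ⟶ (Pbar K n)⟦(1 : ℤ)⟧ :=
  (Q K).map (yMap K m n (m - i)) ≫ (shIso K n).hom

/-!
A chain map `P m ⟶ (P n)⟦1⟧` has a single possibly nonzero component, `R ⟶ R` in degree `-1`,
which is multiplication by some `p ∈ K[x]`, and every `p` occurs. A null-homotopy has two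
components, multiplication by `q` in degree `0` and by `r` in degree `-1`, and exists iff
`p = q x^m - x^n r`, i.e. iff `x^min(m,n) ∣ p`. So `p ↦ [p]` identifies
`Hom(P m, (P n)[1])` with `K[x]/(x^min(m,n))`, in which the monomials `x^j`, `j < min(m,n)`,
form a `K`-basis; and `y^i_{m,n}` is the class of `x^(m-i)`.
-/

namespace Polynomial

variable {R V : Type*} [CommRing R] [AddCommGroup V] [Module R V] (ψ : R[X] →ₗ[R] V) (k : ℕ)

lemma injective_comp_degreeLT_subtype (hker : ∀ p, ψ p = 0 ↔ X ^ k ∣ p) :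
    Function.Injective (ψ ∘ₗ (degreeLT R k).subtype) := by
  rw [← LinearMap.ker_eq_bot, LinearMap.ker_eq_bot']
  rintro ⟨p, hp⟩ hψp
  have hdvd : X ^ k ∣ p := (hker p).mp hψp
  rw [mem_degreeLT] at hp
  ext d
  by_cases hd : d < k
  · exact X_pow_dvd_iff.mp hdvd d hd
  · exact coeff_eq_zero_of_degree_lt (hp.trans_le (by exact_mod_cast not_lt.mp hd))

lemma surjective_comp_degreeLT_subtype [Nontrivial R] (hψ : Function.Surjective ψ)
    (hker : ∀ p, ψ p = 0 ↔ X ^ k ∣ p) :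
    Function.Surjective (ψ ∘ₗ (degreeLT R k).subtype) := by
  intro v
  obtain ⟨p, rfl⟩ := hψ v
  have hmem : p %ₘ X ^ k ∈ degreeLT R k := by
    rw [mem_degreeLT, ← degree_X_pow (R := R)]
    exact degree_modByMonic_lt p (monic_X_pow k)
  refine ⟨⟨p %ₘ X ^ k, hmem⟩, Eq.symm ?_⟩
  rw [LinearMap.comp_apply, Submodule.subtype_apply, ← sub_eq_zero, ← map_sub, hker,
    Submodule.coe_mk, modByMonic_eq_sub_mul_div p (X ^ k), sub_sub_cancel]
  exact dvd_mul_right _ _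

def basisOfSurjectiveOfKer [Nontrivial R] (hψ : Function.Surjective ψ)
    (hker : ∀ p, ψ p = 0 ↔ X ^ k ∣ p) : Module.Basis (Fin k) R V :=
  (degreeLT.basis R k).map <| LinearEquiv.ofBijective _
    ⟨injective_comp_degreeLT_subtype ψ k hker, surjective_comp_degreeLT_subtype ψ k hψ hker⟩

lemma basisOfSurjectiveOfKer_apply [Nontrivial R] (hψ : Function.Surjective ψ)
    (hker : ∀ p, ψ p = 0 ↔ X ^ k ∣ p) (j : Fin k) :
    basisOfSurjectiveOfKer ψ k hψ hker j = ψ (X ^ (j : ℕ)) := by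
  rw [basisOfSurjectiveOfKer, Module.Basis.map_apply]
  exact congrArg ψ (degreeLT.basis_val j)

end Polynomial

lemma pow_min_dvd_iff {R : Type*} [CommRing R] (a p : R) (m n : ℕ) :
    a ^ min m n ∣ p ↔ ∃ q r, p = q * a ^ m - a ^ n * r := by
  constructor
  · rintro ⟨c, rfl⟩
    rcases le_total m n with h | h
    · exact ⟨c, 0, by rw [min_eq_left h]; ring⟩
    · exact ⟨0, -c, by rw [min_eq_right h]; ring⟩
  · rintro ⟨q, r, rfl⟩
    exact dvd_sub (dvd_mul_of_dvd_right (pow_dvd_pow a (min_le_left m n)) q)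
      (dvd_mul_of_dvd_left (pow_dvd_pow a (min_le_right m n)) r)

def mulPoly (p : K[X]) : RMod K ⟶ RMod K :=
  ModuleCat.ofHom (LinearMap.mulLeft K[X] p)

lemma eq_mulPoly (f : RMod K ⟶ RMod K) : f = mulPoly K (f.hom 1) :=
  ModuleCat.hom_ext (LinearMap.ext_ring (mul_one _).symm)

lemma isZero_P_X (n : ℕ) {i : ℤ} (h : i ≠ -1) (h' : i ≠ 0) : IsZero ((P K n).X i) := by
  change IsZero (Pobj K i)
  rw [Pobj, if_neg (by omega)]
  exact ModuleCat.isZero_of_subsingleton _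

lemma isZero_shift_P_X (n : ℕ) {i : ℤ} (h : i ≠ -2) (h' : i ≠ -1) :
    IsZero (((P K n)⟦(1 : ℤ)⟧).X i) :=
  isZero_P_X K n (i := i + 1) (by omega) (by omega)

lemma P_d_neg_one (n : ℕ) : (P K n).d (-1) 0 = mulX K n := by
  change CochainComplex.of.d (Pobj K) (Pd K n) (-1) (-1 + 1) = _
  rw [CochainComplex.of_d]
  exact dif_pos rfl

lemma shift_P_d_neg_two (n : ℕ) : ((P K n)⟦(1 : ℤ)⟧).d (-2) (-1) = -mulX K n := by
  rw [CochainComplex.shiftFunctor_obj_d', Int.negOnePow_one, Units.neg_smul, one_smul]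
  exact congrArg Neg.neg (P_d_neg_one K n)

variable {K} in
lemma hom_ext_of_f_neg_one {m n : ℕ} {f g : P K m ⟶ (P K n)⟦(1 : ℤ)⟧}
    (h : f.f (-1) = g.f (-1)) : f = g := by
  ext i : 1
  by_cases hi : i = -1
  · subst hi
    exact h
  by_cases hi' : i = 0
  · exact (isZero_shift_P_X K n (by omega) (by omega)).eq_of_tgt _ _
  · exact (isZero_P_X K m hi hi').eq_of_src _ _

def yPoly (m n : ℕ) (p : K[X]) : P K m ⟶ (P K n)⟦(1 : ℤ)⟧ where
  f i :=
    if h : i = -1 then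
      eqToHom (by rw [h]; exact PobjNeg K) ≫ mulPoly K p ≫
        eqToHom (by rw [h]; show RMod K = Pobj K (-1 + 1); norm_num [PobjZero])
    else 0
  -- `(P m).X i` and `((P n)⟦1⟧).X (i + 1)` are never both nonzero.
  comm' i j hij := by
    obtain rfl : i + 1 = j := hij
    by_cases hi : i = -1 ∨ i = 0
    · exact (isZero_shift_P_X K n (by omega) (by omega)).eq_of_tgt _ _
    · exact (isZero_P_X K m (by omega) (by omega)).eq_of_src _ _

lemma exists_eq_yPoly {m n : ℕ} (f : P K m ⟶ (P K n)⟦(1 : ℤ)⟧) : ∃ p, f = yPoly K m n p :=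
  ⟨(f.f (-1)).hom (1 : K[X]), hom_ext_of_f_neg_one (eq_mulPoly K _)⟩

lemma yPoly_add (m n : ℕ) (p q : K[X]) : yPoly K m n (p + q) = yPoly K m n p + yPoly K m n q :=
  hom_ext_of_f_neg_one (ModuleCat.hom_ext (LinearMap.ext fun r => add_mul p q r))

lemma yPoly_smul (m n : ℕ) (c : K) (p : K[X]) : yPoly K m n (c • p) = c • yPoly K m n p :=
  hom_ext_of_f_neg_one <| by
    rw [HomologicalComplex.smul_f_apply]
    refine ModuleCat.hom_ext (LinearMap.ext fun (r : K[X]) => ?_)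
    change c • p * r = algebraMap K K[X] c * (p * r)
    rw [Algebra.smul_def, mul_assoc]

def yPolyNullHomotopy (m n : ℕ) (q r : K[X]) :
    Homotopy (yPoly K m n (q * X ^ m - X ^ n * r)) 0 where
  hom i j :=
    if h0 : i = 0 ∧ j = -1 then
      eqToHom (by rw [h0.1]; exact PobjZero K) ≫ mulPoly K q ≫
        eqToHom (by rw [h0.2]; exact (PobjZero K).symm)
    else if h1 : i = -1 ∧ j = -2 then
      eqToHom (by rw [h1.1]; exact PobjNeg K) ≫ mulPoly K r ≫
        eqToHom (by rw [h1.2]; exact (PobjNeg K).symm)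
    else 0
  zero i j hij := by
    have h0 : ¬(i = 0 ∧ j = -1) := by rintro ⟨rfl, rfl⟩; exact hij rfl
    have h1 : ¬(i = -1 ∧ j = -2) := by rintro ⟨rfl, rfl⟩; exact hij rfl
    simp only [dif_neg h0, dif_neg h1]
  comm i := by
    by_cases hi : i = -1
    · subst hi
      rw [dNext_eq _ (show (-1 : ℤ) + 1 = 0 by norm_num),
        prevD_eq _ (show (-2 : ℤ) + 1 = -1 by norm_num), P_d_neg_one, shift_P_d_neg_two,
        HomologicalComplex.zero_f_apply, add_zero]
      refine ModuleCat.hom_ext (LinearMap.ext fun (s : K[X]) => ?_)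
      change (q * X ^ m - X ^ n * r) * s = q * (X ^ m * s) + -(X ^ n * (r * s))
      ring
    by_cases hi' : i = 0
    · exact (isZero_shift_P_X K n (by omega) (by omega)).eq_of_tgt _ _
    · exact (isZero_P_X K m hi hi').eq_of_src _ _

lemma exists_eq_mul_sub_mul_of_homotopy {m n : ℕ} {p : K[X]} (h : Homotopy (yPoly K m n p) 0) :
    ∃ q r : K[X], p = q * X ^ m - X ^ n * r := by
  have hc := h.comm (-1)
  rw [dNext_eq _ (show (-1 : ℤ) + 1 = 0 by norm_num),
    prevD_eq _ (show (-2 : ℤ) + 1 = -1 by norm_num), P_d_neg_one, shift_P_d_neg_two,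
    HomologicalComplex.zero_f_apply, add_zero] at hc
  obtain ⟨q, hq⟩ : ∃ q, h.hom 0 (-1) = mulPoly K q := ⟨_, eq_mulPoly K _⟩
  obtain ⟨r, hr⟩ : ∃ r, h.hom (-1) (-2) = mulPoly K r := ⟨_, eq_mulPoly K _⟩
  rw [hq, hr] at hc
  have hc1 := congrArg (fun f => f.hom (1 : K[X])) hc
  change p * 1 = q * (X ^ m * 1) + -(X ^ n * (r * 1)) at hc1
  exact ⟨q, r, by linear_combination hc1⟩

def ybarOfPoly (m n : ℕ) : K[X] →ₗ[K] (Pbar K m ⟶ (Pbar K n)⟦(1 : ℤ)⟧) where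
  toFun p := (Q K).map (yPoly K m n p) ≫ (shIso K n).hom
  map_add' p q := by rw [yPoly_add, Functor.map_add, Preadditive.add_comp]
  map_smul' c p := by rw [yPoly_smul, Functor.map_smul, Linear.smul_comp, RingHom.id_apply]

lemma ybarOfPoly_X_pow (m n i : ℕ) (hi : i ≤ m) :
    ybarOfPoly K m n (X ^ (m - i)) = ybar K m n i hi := rfl

lemma ybarOfPoly_surjective (m n : ℕ) : Function.Surjective (ybarOfPoly K m n) := by
  intro g
  obtain ⟨f, hf⟩ := (Q K).map_surjective (g ≫ (shIso K n).inv)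
  obtain ⟨p, rfl⟩ := exists_eq_yPoly K f
  refine ⟨p, ?_⟩
  change (Q K).map (yPoly K m n p) ≫ (shIso K n).hom = g
  rw [hf, Category.assoc, Iso.inv_hom_id, Category.comp_id]

lemma ybarOfPoly_eq_zero_iff (m n : ℕ) (p : K[X]) :
    ybarOfPoly K m n p = 0 ↔ X ^ min m n ∣ p := by
  rw [pow_min_dvd_iff]
  change (Q K).map (yPoly K m n p) ≫ (shIso K n).hom = 0 ↔ _
  rw [Preadditive.IsIso.comp_right_eq_zero, HomotopyCategory.quotient_map_eq_zero_iff]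
  constructor
  · rintro ⟨h⟩
    exact exists_eq_mul_sub_mul_of_homotopy K h
  · rintro ⟨q, r, rfl⟩
    exact ⟨yPolyNullHomotopy K m n q r⟩

def finMinEquiv (m n : ℕ) : Fin (min m n) ≃ {i : ℕ // m - n < i ∧ i ≤ m} where
  toFun j := ⟨m - j, by omega⟩
  invFun i := ⟨m - i, by omega⟩
  left_inv j := Fin.ext (by simp only; omega)
  right_inv i := Subtype.ext (by simp only; omega)

theorem ybar_eq_zero_and_basis (m n : ℕ) :
    (∀ (i : ℕ) (hi : i ≤ m), i ≤ m - n → ybar K m n i hi = 0) ∧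
    ∃ b : Module.Basis {i : ℕ // m - n < i ∧ i ≤ m} K (Pbar K m ⟶ (Pbar K n)⟦(1 : ℤ)⟧),
      ∀ i : {i : ℕ // m - n < i ∧ i ≤ m}, b i = ybar K m n i.1 i.2.2 := by
  refine ⟨fun i hi hle => ?_, ?_⟩
  · rw [← ybarOfPoly_X_pow, ybarOfPoly_eq_zero_iff]
    exact pow_dvd_pow X (by omega)
  · refine ⟨(basisOfSurjectiveOfKer (ybarOfPoly K m n) (min m n) (ybarOfPoly_surjective K m n)
      (ybarOfPoly_eq_zero_iff K m n)).reindex (finMinEquiv m n), fun i => ?_⟩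
    rw [Module.Basis.reindex_apply, basisOfSurjectiveOfKer_apply]
    exact ybarOfPoly_X_pow K m n i.1 i.2.2
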